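/- Let A be a nonsingular M-tensor and b ≥ 0. Suppose b^{(k)} > 0 is a componentwise monotonically decreasing sequence converging to b, and let x^{(k)} be the unique positive solution of A x^{m-1} = b^{(k)}. Then x^{(k)} is monotonically decreasing and converges to the maximal nonnegative solution x_max(A,b) of A x^{m-1} = b. -/

import Mathlib

open Finset Filter

noncomputable section

/-- Action of an order-(p+1) tensor (p trailing indices):
`(A x^{p})_i = ∑ a_{i i₂ … i_{p+1}} x_{i₂} ⋯ x_{i_{p+1}}`. -/
def tapp (p n : ℕ) (A : Fin n → (Fin p → Fin n) → ℝ) (x : Fin n → ℝ) : Fin n → ℝ :=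
  fun i => ∑ js : Fin p → Fin n, A i js * ∏ j, x (js j)

/-- A `Z`-tensor: all off-diagonal entries are nonpositive. -/
def IsZTensor (p n : ℕ) (A : Fin n → (Fin p → Fin n) → ℝ) : Prop :=
  ∀ i js, (∃ j, js j ≠ i) → A i js ≤ 0

/-- The identity tensor. -/
def identT (p n : ℕ) : Fin n → (Fin p → Fin n) → ℝ :=
  fun i js => if ∀ j, js j = i then 1 else 0

/-- Spectral radius of a tensor: sup of moduli of (real) eigenvalues. -/
def tensorSpecRad (p n : ℕ) (B : Fin n → (Fin p → Fin n) → ℝ) : ℝ :=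
  sSup {r : ℝ | ∃ lam : ℝ, ∃ x : Fin n → ℝ, x ≠ 0 ∧
    (∀ i, tapp p n B x i = lam * x i ^ p) ∧ r = |lam|}

/-- A nonsingular M-tensor: `A = s I − B` with `B ≥ 0` and `s > ρ(B)`. -/
def IsMTensor (p n : ℕ) (A : Fin n → (Fin p → Fin n) → ℝ) : Prop :=
  ∃ s : ℝ, ∃ B : Fin n → (Fin p → Fin n) → ℝ,
    (∀ i js, 0 ≤ B i js) ∧ tensorSpecRad p n B < s ∧
    ∀ i js, A i js = s * identT p n i js - B i js

/-- The diagonal-part tensor of `A`. -/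
def diagT (p n : ℕ) (A : Fin n → (Fin p → Fin n) → ℝ) : Fin n → (Fin p → Fin n) → ℝ :=
  fun i js => if ∀ j, js j = i then A i (fun _ => i) else 0

/-- The majorization matrix of `A`: `M_{ij} = a_{i j … j}`. -/
def majMatrix (p n : ℕ) (A : Fin n → (Fin p → Fin n) → ℝ) : Matrix (Fin n) (Fin n) ℝ :=
  fun i j => A i (fun _ => j)

/-- The "mixed index" part `N = M_tensor − A`: zero on constant trailing tuples,
`−A` elsewhere. -/
def NPart (p n : ℕ) (A : Fin n → (Fin p → Fin n) → ℝ) : Fin n → (Fin p → Fin n) → ℝ :=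
  fun i js => if ∀ j' j'', js j' = js j'' then 0 else -A i js

/-- A nonsingular M-matrix: a Z-matrix with `M y > 0` for some `y > 0`. -/
def IsMMatrix (n : ℕ) (P : Matrix (Fin n) (Fin n) ℝ) : Prop :=
  (∀ i j, i ≠ j → P i j ≤ 0) ∧ ∃ y : Fin n → ℝ, (∀ i, 0 < y i) ∧ ∀ i, 0 < P.mulVec y i

/-- Spectral radius of a real matrix (via its complex spectrum). -/
def matSpecRad (n : ℕ) (J : Matrix (Fin n) (Fin n) ℝ) : ℝ :=
  sSup {r : ℝ | ∃ μ ∈ spectrum ℂ (J.map (Complex.ofReal ·)), r = ‖μ‖}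

/-- Irreducibility of a matrix. -/
def MatIrreducible (n : ℕ) (J : Matrix (Fin n) (Fin n) ℝ) : Prop :=
  ∀ S : Finset (Fin n), S.Nonempty → S ≠ Finset.univ → ∃ i ∈ S, ∃ j, j ∉ S ∧ J i j ≠ 0

/-! Writing `A = s I - B` with `B ≥ 0`, the map `x ↦ A x^{m-1}` satisfies a comparison principle
(`A y ≤ A x` with `x > 0`, `A x > 0`, `y ≥ 0` forces `y ≤ x`), which only uses the homogeneity of
`B x^{m-1}` and its monotonicity in `x ≥ 0`. It makes `x⁽ᵏ⁾` decreasing and puts every nonnegative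
solution of `A x^{m-1} = b` below every `x⁽ᵏ⁾`; the infimum of the `x⁽ᵏ⁾` solves the equation by
continuity, so it is the maximal one. -/

section TensorComparison

variable {p n : ℕ}

theorem tapp_eq_mul_pow_sub {s : ℝ} {A B : Fin n → (Fin p → Fin n) → ℝ}
    (hAB : ∀ i js, A i js = s * identT p n i js - B i js) (x : Fin n → ℝ) (i : Fin n) :
    tapp p n A x i = s * x i ^ p - tapp p n B x i := by
  have hident : ∑ js : Fin p → Fin n, identT p n i js * ∏ j, x (js j) = x i ^ p := by
    rw [Fintype.sum_eq_single (fun _ => i)]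
    · simp [identT]
    · intro js hjs
      have : ¬ ∀ j, js j = i := fun h => hjs (funext h)
      simp [identT, this]
  simp only [tapp, hAB, sub_mul, Finset.sum_sub_distrib, mul_assoc, ← Finset.mul_sum, hident]

theorem tapp_smul (A : Fin n → (Fin p → Fin n) → ℝ) (t : ℝ) (x : Fin n → ℝ) :
    tapp p n A (t • x) = t ^ p • tapp p n A x := by
  ext i
  simp only [tapp, Pi.smul_apply, smul_eq_mul, Finset.prod_mul_distrib, Finset.prod_const,
    Finset.card_univ, Fintype.card_fin, Finset.mul_sum]
  exact Finset.sum_congr rfl fun _ _ => by ring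

theorem tapp_mono {B : Fin n → (Fin p → Fin n) → ℝ} (hB : ∀ i js, 0 ≤ B i js)
    {x y : Fin n → ℝ} (hx : 0 ≤ x) (hxy : x ≤ y) : tapp p n B x ≤ tapp p n B y :=
  fun i => Finset.sum_le_sum fun js _ => mul_le_mul_of_nonneg_left
    (Finset.prod_le_prod (fun _ _ => hx _) (fun _ _ => hxy _)) (hB i js)

theorem le_of_tapp_le {s : ℝ} {A B : Fin n → (Fin p → Fin n) → ℝ} (hp : 1 ≤ p)
    (hB : ∀ i js, 0 ≤ B i js) (hAB : ∀ i js, A i js = s * identT p n i js - B i js)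
    {x y : Fin n → ℝ} (hx : ∀ i, 0 < x i) (hy : 0 ≤ y)
    (hle : tapp p n A y ≤ tapp p n A x) (hpos : ∀ i, 0 < tapp p n A x i) : y ≤ x := by
  rcases isEmpty_or_nonempty (Fin n) with hn | hn
  · exact fun i => isEmptyElim i
  -- Scale `x` by the largest ratio `t = y i₀ / x i₀`; if `t > 1`, row `i₀` gives
  -- `(A y)_{i₀} ≥ t ^ p (A x)_{i₀} > (A x)_{i₀}`.
  obtain ⟨i₀, -, hi₀⟩ := Finset.exists_max_image Finset.univ (fun i => y i / x i) univ_nonempty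
  set t := y i₀ / x i₀
  have hyt : y ≤ t • x := fun j =>
    (div_le_iff₀ (hx j)).mp (hi₀ j (Finset.mem_univ j))
  by_contra hyx
  have ht : 1 < t := by
    by_contra! ht
    exact hyx fun j => (hyt j).trans (by simpa using mul_le_of_le_one_left (hx j).le ht)
  have hyi₀ : y i₀ = t * x i₀ := (div_mul_cancel₀ _ (hx i₀).ne').symm
  have hBy : tapp p n B y i₀ ≤ t ^ p * tapp p n B x i₀ := by
    simpa [tapp_smul] using tapp_mono hB hy hyt i₀
  have hAy : t ^ p * tapp p n A x i₀ ≤ tapp p n A y i₀ := by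
    rw [tapp_eq_mul_pow_sub hAB, tapp_eq_mul_pow_sub hAB, hyi₀, mul_pow]
    nlinarith
  have htp : 1 < t ^ p := one_lt_pow₀ ht (by omega)
  nlinarith [hle i₀, hpos i₀]

theorem continuous_tapp (A : Fin n → (Fin p → Fin n) → ℝ) : Continuous (tapp p n A) :=
  continuous_pi fun _ => continuous_finsetSum _ fun _ _ =>
    continuous_const.mul (continuous_finsetProd _ fun _ _ => continuous_apply _)

end TensorComparison

theorem stmt10_general (m n : ℕ) (hm : 2 ≤ m) (A : Fin n → (Fin (m-1) → Fin n) → ℝ)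
    (hA : IsMTensor (m-1) n A) (b : Fin n → ℝ)
    (bs : ℕ → Fin n → ℝ) (hbpos : ∀ k i, 0 < bs k i)
    (hbdec : ∀ k, bs (k+1) ≤ bs k)
    (hblim : Filter.Tendsto bs Filter.atTop (nhds b))
    (xs : ℕ → Fin n → ℝ) (hxpos : ∀ k i, 0 < xs k i)
    (hxsol : ∀ k, tapp (m-1) n A (xs k) = bs k) :
    (∀ k, xs (k+1) ≤ xs k) ∧
    ∃ xmax : Fin n → ℝ, 0 ≤ xmax ∧ tapp (m-1) n A xmax = b ∧
      (∀ y : Fin n → ℝ, 0 ≤ y → tapp (m-1) n A y = b → y ≤ xmax) ∧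
      Filter.Tendsto xs Filter.atTop (nhds xmax) := by
  obtain ⟨s, B, hB, -, hAB⟩ := hA
  have compare : ∀ k y, 0 ≤ y → tapp (m-1) n A y ≤ bs k → y ≤ xs k := fun k y hy hyb =>
    le_of_tapp_le (by omega) hB hAB (hxpos k) hy (by rwa [hxsol k])
      (by simpa [hxsol k] using hbpos k)
  have hmono : ∀ k, xs (k+1) ≤ xs k := fun k =>
    compare k _ (fun i => (hxpos (k+1) i).le) ((hxsol (k+1)).trans_le (hbdec k))
  have hbdd : BddBelow (Set.range xs) := ⟨0, by rintro _ ⟨k, rfl⟩ i; exact (hxpos k i).le⟩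
  have htend : Tendsto xs atTop (nhds (⨅ k, xs k)) :=
    tendsto_atTop_ciInf (antitone_nat_of_succ_le hmono) hbdd
  have hsol : tapp (m-1) n A (⨅ k, xs k) = b := by
    refine tendsto_nhds_unique (((continuous_tapp A).tendsto _).comp htend) ?_
    simpa [Function.comp_def, hxsol] using hblim
  refine ⟨hmono, ⨅ k, xs k, le_ciInf fun k i => (hxpos k i).le, hsol, ?_, htend⟩
  intro y hy hyb
  exact le_ciInf fun k => compare k y hy
    (hyb ▸ (antitone_nat_of_succ_le hbdec).le_of_tendsto hblim k)

/-- if `b⁽ᵏ⁾ > 0` decreases to `b ≥ 0` and `x⁽ᵏ⁾` is the unique positive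
solution of `A x^{m-1} = b⁽ᵏ⁾`, then `x⁽ᵏ⁾` decreases and converges to the maximal
nonnegative solution of `A x^{m-1} = b`. -/
theorem stmt10 (m n : ℕ) (hm : 2 ≤ m) (A : Fin n → (Fin (m-1) → Fin n) → ℝ)
    (hA : IsMTensor (m-1) n A) (b : Fin n → ℝ) (hb : 0 ≤ b)
    (bs : ℕ → Fin n → ℝ) (hbpos : ∀ k i, 0 < bs k i)
    (hbdec : ∀ k, bs (k+1) ≤ bs k)
    (hblim : Filter.Tendsto bs Filter.atTop (nhds b))
    (xs : ℕ → Fin n → ℝ) (hxpos : ∀ k i, 0 < xs k i)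
    (hxsol : ∀ k, tapp (m-1) n A (xs k) = bs k)
    (huniq : ∀ k, ∀ y : Fin n → ℝ, (∀ i, 0 < y i) →
      tapp (m-1) n A y = bs k → y = xs k) :
    (∀ k, xs (k+1) ≤ xs k) ∧
    ∃ xmax : Fin n → ℝ, 0 ≤ xmax ∧ tapp (m-1) n A xmax = b ∧
      (∀ y : Fin n → ℝ, 0 ≤ y → tapp (m-1) n A y = b → y ≤ xmax) ∧
      Filter.Tendsto xs Filter.atTop (nhds xmax) :=
  stmt10_general m n hm A hA b bs hbpos hbdec hblim xs hxpos hxsol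

end
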